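/- arXiv:math/9912206 — 3 statements merged into one kernel-verified Lean document; each statement's English description precedes it below -/
import Mathlib

section
/- There is an absolute constant C such that for every n ≥ 2, all t, s ∈ ℝ and all nonzero x, y ∈ ℝⁿ the following holds: if 0 ≤ t − |x| ≤ 1, t/10 ≤ s ≤ t, s − 1 ≤ |y| ≤ s, and |x − y| ≤ t − s, then | x/|x| − y/|y| | ≤ C/√t. -/
open Real

noncomputable section

/-- **Lemma 2.2: angular localization from externally tangent spheres.** -/
theorem angular_localization
    : ∃ C : ℝ, 0 < C ∧
      ∀ (n : ℕ), 2 ≤ n →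
        ∀ (t s : ℝ) (x y : EuclideanSpace ℝ (Fin n)),
          x ≠ 0 → y ≠ 0 →
          0 ≤ t - ‖x‖ → t - ‖x‖ ≤ 1 →
          t / 10 ≤ s → s ≤ t →
          s - 1 ≤ ‖y‖ → ‖y‖ ≤ s →
          ‖x - y‖ ≤ t - s →
          ‖‖x‖⁻¹ • x - ‖y‖⁻¹ • y‖ ≤ C / Real.sqrt t := by
  refine ⟨20, by norm_num, ?_⟩
  intro n hn t s x y hx hy h1 h2 h3 h4 h5 h6 h7
  have ha : 0 < ‖x‖ := norm_pos_iff.mpr hx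
  have hb : 0 < ‖y‖ := norm_pos_iff.mpr hy
  have ht : 0 < t := lt_of_lt_of_le ha (by linarith)
  have hst : (0:ℝ) < Real.sqrt t := Real.sqrt_pos.mpr ht
  by_cases hcase : t ≤ 100
  · have h2' : ‖‖x‖⁻¹ • x - ‖y‖⁻¹ • y‖ ≤ 2 := by
      calc ‖‖x‖⁻¹ • x - ‖y‖⁻¹ • y‖ ≤ ‖‖x‖⁻¹ • x‖ + ‖‖y‖⁻¹ • y‖ := norm_sub_le _ _
      _ = 2 := by
          rw [norm_smul, norm_smul, norm_inv, norm_norm, norm_inv, norm_norm,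
            inv_mul_cancel₀ ha.ne', inv_mul_cancel₀ hb.ne']
          norm_num
    have hs10 : Real.sqrt t ≤ 10 := by
      rw [show (10:ℝ) = Real.sqrt 100 by
        rw [show (100:ℝ) = 10^2 by norm_num, Real.sqrt_sq]; norm_num]
      exact Real.sqrt_le_sqrt hcase
    rw [le_div_iff₀ hst]
    nlinarith [norm_nonneg (‖x‖⁻¹ • x - ‖y‖⁻¹ • y)]
  · push_neg at hcase
    set a := ‖x‖ with haa
    set b := ‖y‖ with hbb
    set d := ‖x - y‖ with hdd
    set U := ‖‖x‖⁻¹ • x - ‖y‖⁻¹ • y‖ with hUU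
    obtain ⟨p, hpdef⟩ : ∃ p : ℝ, p = (inner ℝ x y : ℝ) := ⟨_, rfl⟩
    have hp : d ^ 2 = a ^ 2 - 2 * p + b ^ 2 := by rw [hpdef]; exact norm_sub_sq_real x y
    have hu : U ^ 2 = 2 - 2 * (a⁻¹ * b⁻¹ * p) := by
      rw [hpdef, hUU, norm_sub_sq_real, norm_smul, norm_smul, real_inner_smul_left,
        real_inner_smul_right, norm_inv, norm_norm, norm_inv, norm_norm,
        inv_mul_cancel₀ ha.ne', inv_mul_cancel₀ hb.ne']
      ring
    have hu2 : a * b * U ^ 2 = 2 * a * b - 2 * p := by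
      rw [hu]; field_simp
    have key : a * b * U ^ 2 = d ^ 2 - (a - b) ^ 2 := by
      linear_combination hu2 - hp
    have habd : |a - b| ≤ d := abs_norm_sub_norm_le x y
    have habd1 : a - b ≤ d := le_trans (le_abs_self _) habd
    have habd2 : -d ≤ a - b := neg_le_of_abs_le habd
    have hd0 : 0 ≤ d := norm_nonneg _
    have hnum : a * b * U ^ 2 ≤ 2 * t := by
      have hde : d - (a - b) ≤ 1 := by linarith
      have hde0 : 0 ≤ d - (a - b) := by linarith
      have hdpe : 0 ≤ d + (a - b) := by linarith
      have hdpe2 : d + (a - b) ≤ 2 * t := by linarith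
      nlinarith [mul_le_mul hde hdpe2 hdpe (by norm_num : (0:ℝ) ≤ 1)]
    have hU0 : 0 ≤ U := norm_nonneg _
    have hub : a ≥ t - 1 := by linarith
    have hlb : b ≥ s - 1 := by linarith
    clear_value a b d U
    clear hpdef hp hu hu2 hUU hdd haa hbb hx hy habd x y
    have hq : t ^ 2 / 20 ≤ (t - 1) * (t / 10 - 1) := by nlinarith
    have hab : (t - 1) * (t / 10 - 1) ≤ a * b :=
      mul_le_mul (by linarith) (by linarith) (by linarith) (by linarith)
    have h2' : t ^ 2 / 20 * U ^ 2 ≤ 2 * t := by nlinarith [sq_nonneg U]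
    have hU2 : U ^ 2 ≤ 400 / t := by
      rw [le_div_iff₀ ht]
      have h20 : (0:ℝ) ≤ 20 / t := by positivity
      have h3' := mul_le_mul_of_nonneg_left h2' h20
      have heq : 20 / t * (t ^ 2 / 20 * U ^ 2) = U ^ 2 * t := by
        field_simp
      rw [heq] at h3'
      calc U ^ 2 * t ≤ 20 / t * (2 * t) := h3'
        _ = 40 := by field_simp; ring
        _ ≤ 400 := by norm_num
    have h400 : U ^ 2 ≤ (20 / Real.sqrt t) ^ 2 := by
      have : (20 / Real.sqrt t) ^ 2 = 400 / t := by
        rw [div_pow, Real.sq_sqrt ht.le]; norm_num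
      rw [this]; exact hU2
    have hfin := Real.sqrt_le_sqrt h400
    rwa [Real.sqrt_sq hU0, Real.sqrt_sq (by positivity)] at hfin
end
end

section
/- Let 1 ≤ p ≤ q ≤ ∞, let d ≥ 1, and let K be a measurable function on ℝ^m × ℝ^n. Suppose ℝ^m = ⋃_{j∈ℤ^d} A_j and ℝ^n = ⋃_{k∈ℤ^d} B_k are partitions into disjoint measurable sets, and suppose there is a constant C ≥ 0 such that K(x,y) = 0 whenever x ∈ A_j and y ∈ B_k with |j − k| ≥ C (sup-norm on ℤ^d). For j, k ∈ ℤ^d let K_{jk}(x,y) = K(x,y) for (x,y) ∈ A_j × B_k and K_{jk}(x,y) = 0 otherwise, and let T and T_{jk} be the integral operators with kernels K and K_{jk} respectively, i.e., Tf(x) = ∫ K(x,y) f(y) dy. Suppose M = sup_{j,k} ‖T_{jk}‖_{L^p(ℝ^n) → L^q(ℝ^m)} < ∞. Then for every f ∈ L^p(ℝ^n) for which Tf is defined a.e., ‖Tf‖_{L^q(ℝ^m)} ≤ (2C+1)^d · M · ‖f‖_{L^p(ℝ^n)}. -/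
open MeasureTheory Set
open scoped ENNReal

noncomputable section

lemma aux_pow_sum {ι : Type*} (s : Finset ι) (z : ι → ℝ≥0∞) {r : ℝ} (hr : 1 ≤ r) :
    (∑ i ∈ s, z i) ^ r ≤ (s.card : ℝ≥0∞) ^ (r - 1) * ∑ i ∈ s, z i ^ r := by
  rcases s.eq_empty_or_nonempty with rfl | hs
  · simp [ENNReal.zero_rpow_of_pos (lt_of_lt_of_le one_pos hr)]
  have hN0 : (s.card : ℝ≥0∞) ≠ 0 := by
    simpa using Finset.card_ne_zero_of_mem hs.choose_spec
  have hNt : (s.card : ℝ≥0∞) ≠ ⊤ := by simp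
  have hw : ∑ _i ∈ s, (s.card : ℝ≥0∞)⁻¹ = 1 := by
    rw [Finset.sum_const, nsmul_eq_mul, ENNReal.mul_inv_cancel hN0 hNt]
  have key := ENNReal.rpow_arith_mean_le_arith_mean_rpow s
      (fun _ => (s.card : ℝ≥0∞)⁻¹) z hw hr
  have h1 : ∑ i ∈ s, z i = (s.card : ℝ≥0∞) * ∑ i ∈ s, (s.card : ℝ≥0∞)⁻¹ * z i := by
    rw [← Finset.mul_sum, ← mul_assoc, ENNReal.mul_inv_cancel hN0 hNt, one_mul]
  calc (∑ i ∈ s, z i) ^ r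
      = (s.card : ℝ≥0∞) ^ r * (∑ i ∈ s, (s.card : ℝ≥0∞)⁻¹ * z i) ^ r := by
        rw [h1, ENNReal.mul_rpow_of_nonneg _ _ (by linarith)]
    _ ≤ (s.card : ℝ≥0∞) ^ r * ∑ i ∈ s, (s.card : ℝ≥0∞)⁻¹ * z i ^ r :=
        mul_le_mul_right key _
    _ = (s.card : ℝ≥0∞) ^ (r - 1) * ∑ i ∈ s, z i ^ r := by
        rw [← Finset.mul_sum, ← mul_assoc]
        congr 1
        rw [← ENNReal.rpow_neg_one (s.card : ℝ≥0∞), ← ENNReal.rpow_add _ _ hN0 hNt]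
        ring_nf

lemma aux_tsum_rpow {ι : Type*} [Countable ι] (z : ι → ℝ≥0∞) {r : ℝ} (hr : 1 ≤ r) :
    ∑' i, z i ^ r ≤ (∑' i, z i) ^ r := by
  have hr0 : 0 < r := lt_of_lt_of_le one_pos hr
  set Z := ∑' i, z i with hZ
  rcases eq_or_ne Z ⊤ with hT | hT
  · rw [hT, ENNReal.top_rpow_of_pos hr0]; exact le_top
  rcases eq_or_ne Z 0 with h0 | h0
  · have : ∀ i, z i = 0 := by
      intro i
      have := ENNReal.le_tsum (f := z) i
      rw [← hZ, h0] at this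
      simpa using this
    simp [this, ENNReal.zero_rpow_of_pos hr0]
  have key : ∀ i, z i ^ r ≤ Z ^ (r - 1) * z i := by
    intro i
    rcases eq_or_ne (z i) 0 with hz | hz
    · simp [hz, ENNReal.zero_rpow_of_pos hr0]
    have hzt : z i ≠ ⊤ := ne_top_of_le_ne_top hT (ENNReal.le_tsum i)
    have : z i ^ r = z i ^ (r - 1) * z i := by
      rw [show r = (r-1)+1 by ring, ENNReal.rpow_add _ _ hz hzt, ENNReal.rpow_one]
      ring_nf
    rw [this]
    exact mul_le_mul_left (ENNReal.rpow_le_rpow (ENNReal.le_tsum i) (by linarith)) _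
  calc ∑' i, z i ^ r ≤ ∑' i, Z ^ (r - 1) * z i := ENNReal.tsum_le_tsum key
    _ = Z ^ (r - 1) * Z := by rw [ENNReal.tsum_mul_left]
    _ = Z ^ r := by
        conv_rhs => rw [show r = (r-1)+1 by ring]
        rw [ENNReal.rpow_add _ _ h0 hT, ENNReal.rpow_one]

def nbhd (d : ℕ) (c : ℤ) (j : Fin d → ℤ) : Finset (Fin d → ℤ) :=
  Fintype.piFinset fun i => Finset.Icc (j i - (c - 1)) (j i + (c - 1))

lemma mem_nbhd {d : ℕ} {c : ℤ} {j k : Fin d → ℤ} :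
    k ∈ nbhd d c j ↔ ∀ i, |j i - k i| ≤ c - 1 := by
  simp only [nbhd, Fintype.mem_piFinset, Finset.mem_Icc]
  constructor
  · intro h i; have := h i; rw [abs_le]; omega
  · intro h i; have := h i; rw [abs_le] at this; omega

lemma nbhd_symm {d : ℕ} {c : ℤ} {j k : Fin d → ℤ} :
    k ∈ nbhd d c j ↔ j ∈ nbhd d c k := by
  simp only [mem_nbhd]
  constructor <;> intro h i <;> have := h i <;> rw [abs_le] at * <;> omega

lemma card_nbhd {d : ℕ} {c : ℤ} (j : Fin d → ℤ) :
    (nbhd d c j).card = (2 * c - 1).toNat ^ d := by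
  rw [nbhd, Fintype.card_piFinset]
  have : ∀ i : Fin d, (Finset.Icc (j i - (c - 1)) (j i + (c - 1))).card = (2 * c - 1).toNat := by
    intro i
    rw [Int.card_Icc]
    congr 1
    ring
  rw [Finset.prod_congr rfl (fun i _ => this i)]
  simp

/-- **Lemma 2.3: the overlap lemma for integral operators with
almost-diagonal block kernels.** -/
theorem overlap_lemma
    (m n d : ℕ) (hd : 1 ≤ d) (p q : ℝ≥0∞) (hp : 1 ≤ p) (hpq : p ≤ q)
    (K : (Fin m → ℝ) → (Fin n → ℝ) → ℝ)
    (hK : Measurable (fun z : (Fin m → ℝ) × (Fin n → ℝ) => K z.1 z.2))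
    (A : (Fin d → ℤ) → Set (Fin m → ℝ)) (B : (Fin d → ℤ) → Set (Fin n → ℝ))
    (hAmeas : ∀ j, MeasurableSet (A j)) (hBmeas : ∀ k, MeasurableSet (B k))
    (hAdisj : ∀ j j', j ≠ j' → Disjoint (A j) (A j'))
    (hBdisj : ∀ k k', k ≠ k' → Disjoint (B k) (B k'))
    (hAcover : (⋃ j, A j) = univ) (hBcover : (⋃ k, B k) = univ)
    (C : ℝ) (hC : 0 ≤ C)
    (hvanish : ∀ j k : Fin d → ℤ, (∃ i, C ≤ |(j i : ℝ) - (k i : ℝ)|) →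
      ∀ x ∈ A j, ∀ y ∈ B k, K x y = 0)
    (M : ℝ) (hM0 : 0 ≤ M)
    (hM : ∀ j k : Fin d → ℤ, ∀ f : (Fin n → ℝ) → ℝ, MemLp f p volume →
      eLpNorm (fun x => ∫ y, (A j ×ˢ B k).indicator
          (fun z : (Fin m → ℝ) × (Fin n → ℝ) => K z.1 z.2) (x, y) * f y) q volume ≤
        ENNReal.ofReal M * eLpNorm f p volume) :
    ∀ f : (Fin n → ℝ) → ℝ, MemLp f p volume →
      (∀ᵐ x, Integrable (fun y => K x y * f y)) →
      eLpNorm (fun x => ∫ y, K x y * f y) q volume ≤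
        ENNReal.ofReal ((2 * C + 1) ^ d * M) * eLpNorm f p volume := by
  intro f hf hint
  classical
  set Kf : (Fin m → ℝ) × (Fin n → ℝ) → ℝ := fun z => K z.1 z.2 with hKfdef
  set c : ℤ := ⌈C⌉ with hcdef
  set N : ℕ := (2 * c - 1).toNat ^ d with hNdef
  set g : (Fin d → ℤ) → (Fin d → ℤ) → (Fin m → ℝ) → ℝ :=
    fun j k x => ∫ y, (A j ×ˢ B k).indicator Kf (x, y) * f y with hgdef
  have hq0 : q ≠ 0 := (lt_of_lt_of_le zero_lt_one (hp.trans hpq)).ne'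
  -- numerical bound on N
  have hNreal : (N : ℝ) ≤ (2 * C + 1) ^ d := by
    have hc1 : (c : ℝ) ≤ C + 1 := by
      have := Int.ceil_lt_add_one C
      rw [hcdef]; linarith
    have h1 : ((2 * c - 1).toNat : ℝ) ≤ 2 * C + 1 := by
      rcases le_or_gt (2 * c - 1) 0 with h | h
      · rw [Int.toNat_of_nonpos h]; push_cast; linarith
      · have h2 : (((2 * c - 1).toNat : ℤ) : ℝ) ≤ 2 * C + 1 := by
          rw [Int.toNat_of_nonneg h.le]; push_cast; linarith
        exact_mod_cast h2
    have h0 : (0:ℝ) ≤ ((2 * c - 1).toNat : ℝ) := by positivity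
    calc (N : ℝ) = ((2 * c - 1).toNat : ℝ) ^ d := by rw [hNdef]; push_cast; ring
      _ ≤ (2 * C + 1) ^ d := pow_le_pow_left₀ h0 h1 d
  have hconst : (N : ℝ≥0∞) * ENNReal.ofReal M ≤ ENNReal.ofReal ((2 * C + 1) ^ d * M) := by
    rw [ENNReal.ofReal_mul (by positivity)]
    refine mul_le_mul_left ?_ _
    rw [← ENNReal.ofReal_natCast N]
    exact ENNReal.ofReal_le_ofReal hNreal
  -- vanishing outside the neighborhood
  have hvan' : ∀ j k : Fin d → ℤ, k ∉ nbhd d c j → ∀ x ∈ A j, ∀ y ∈ B k, K x y = 0 := by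
    intro j k hk x hx y hy
    rw [mem_nbhd] at hk
    push_neg at hk
    obtain ⟨i, hi⟩ := hk
    refine hvanish j k ⟨i, ?_⟩ x hx y hy
    have h1 : c ≤ |j i - k i| := by omega
    have h2 : (C : ℝ) ≤ (c : ℝ) := Int.le_ceil C
    calc C ≤ (c : ℝ) := h2
      _ ≤ ((|j i - k i| : ℤ) : ℝ) := by exact_mod_cast h1
      _ = |(j i : ℝ) - (k i : ℝ)| := by push_cast; ring
  -- splitting the integral
  have hsplit : ∀ j, ∀ x ∈ A j, Integrable (fun y => K x y * f y) →
      (∫ y, K x y * f y) = ∑ k ∈ nbhd d c j, g j k x := by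
    intro j x hx hI
    have hfun : ∀ y, K x y * f y
        = ∑ k ∈ nbhd d c j, (A j ×ˢ B k).indicator Kf (x, y) * f y := by
      intro y
      obtain ⟨k₀, hy⟩ : ∃ k₀, y ∈ B k₀ := by
        have : y ∈ ⋃ k, B k := hBcover ▸ mem_univ y
        simpa using this
      have hterm : ∀ k, k ≠ k₀ → (A j ×ˢ B k).indicator Kf (x, y) = 0 := by
        intro k hk
        apply indicator_of_notMem
        rintro ⟨-, hyk⟩
        exact absurd hy (Set.disjoint_left.mp (hBdisj k k₀ hk) hyk)
      by_cases hk₀ : k₀ ∈ nbhd d c j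
      · rw [Finset.sum_eq_single_of_mem k₀ hk₀
          (fun k _ hk => by simp only [hterm k hk, zero_mul])]
        simp only [indicator_of_mem (mk_mem_prod hx hy), hKfdef]
      · rw [hvan' j k₀ hk₀ x hx y hy, zero_mul]
        symm
        apply Finset.sum_eq_zero
        intro k hk
        have hne : k ≠ k₀ := fun h => hk₀ (h ▸ hk)
        simp only [hterm k hne, zero_mul]
    have hIk : ∀ k ∈ nbhd d c j,
        Integrable (fun y => (A j ×ˢ B k).indicator Kf (x, y) * f y) := by
      intro k _
      apply (hI.indicator (hBmeas k)).congr
      apply ae_of_all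
      intro y
      by_cases hy : y ∈ B k
      · simp [Set.indicator_apply, hy, hx, hKfdef]
      · simp [Set.indicator_apply, hy]
    calc ∫ y, K x y * f y
        = ∫ y, ∑ k ∈ nbhd d c j, (A j ×ˢ B k).indicator Kf (x, y) * f y :=
          integral_congr_ae (ae_of_all _ hfun)
      _ = ∑ k ∈ nbhd d c j, g j k x := integral_finset_sum _ hIk
  -- measurability of the blocks
  have hgmeas : ∀ j k, AEStronglyMeasurable (g j k) volume := by
    intro j k
    have hFmeas : AEStronglyMeasurable
        (fun z : (Fin m → ℝ) × (Fin n → ℝ) => (A j ×ˢ B k).indicator Kf z * f z.2)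
        (volume.prod volume) := by
      refine AEStronglyMeasurable.mul ?_ ?_
      · exact (hK.indicator ((hAmeas j).prod (hBmeas k))).aestronglyMeasurable
      · exact hf.1.comp_quasiMeasurePreserving Measure.quasiMeasurePreserving_snd
    exact hFmeas.integral_prod_right'
  -- block estimate
  have hgle : ∀ j k, eLpNorm (g j k) q volume ≤
      ENNReal.ofReal M * eLpNorm ((B k).indicator f) p volume := by
    intro j k
    have hfk : MemLp ((B k).indicator f) p volume := hf.indicator (hBmeas k)
    have h1 := hM j k _ hfk
    have h2 : g j k = fun x => ∫ y,
        (A j ×ˢ B k).indicator Kf (x, y) * ((B k).indicator f) y := by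
      funext x
      refine integral_congr_ae (ae_of_all _ fun y => ?_)
      by_cases hy : y ∈ B k
      · simp [Set.indicator_apply, hy]
      · simp [Set.indicator_apply, hy]
    rw [h2]
    exact h1
  by_cases hqtop : q = ∞
  · -- case q = ∞
    subst hqtop
    rw [eLpNorm_exponent_top]
    have hcount : ∀ᵐ x : Fin m → ℝ, ∀ jk : (Fin d → ℤ) × (Fin d → ℤ),
        (‖g jk.1 jk.2 x‖₊ : ℝ≥0∞) ≤ eLpNormEssSup (g jk.1 jk.2) volume := by
      rw [ae_all_iff]
      intro jk
      exact ae_le_eLpNormEssSup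
    refine essSup_le_of_ae_le _ ?_
    filter_upwards [hint, hcount] with x hIx hbx
    obtain ⟨j, hxj⟩ : ∃ j, x ∈ A j := by
      have : x ∈ ⋃ j, A j := hAcover ▸ mem_univ x
      simpa using this
    calc (‖∫ y, K x y * f y‖₊ : ℝ≥0∞)
        = ‖∑ k ∈ nbhd d c j, g j k x‖₊ := by rw [hsplit j x hxj hIx]
      _ ≤ ∑ k ∈ nbhd d c j, (‖g j k x‖₊ : ℝ≥0∞) := by
          rw [← ENNReal.coe_finset_sum]
          exact_mod_cast nnnorm_sum_le _ _
      _ ≤ ∑ k ∈ nbhd d c j, eLpNormEssSup (g j k) volume :=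
          Finset.sum_le_sum fun k _ => hbx (j, k)
      _ ≤ ∑ _k ∈ nbhd d c j, ENNReal.ofReal M * eLpNorm f p volume := by
          refine Finset.sum_le_sum fun k _ => ?_
          have h1 := hgle j k
          rw [eLpNorm_exponent_top] at h1
          exact h1.trans (mul_le_mul_right (eLpNorm_indicator_le f) _)
      _ = (N : ℝ≥0∞) * (ENNReal.ofReal M * eLpNorm f p volume) := by
          rw [Finset.sum_const, card_nbhd, nsmul_eq_mul, hNdef]
      _ ≤ ENNReal.ofReal ((2 * C + 1) ^ d * M) * eLpNorm f p volume := by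
          rw [← mul_assoc]
          exact mul_le_mul_left hconst _
  · -- case q < ∞
    have hptop : p ≠ ∞ := (hpq.trans_lt (lt_top_iff_ne_top.mpr hqtop)).ne
    have hp0 : p ≠ 0 := (lt_of_lt_of_le zero_lt_one hp).ne'
    set qr : ℝ := q.toReal with hqrdef
    set pr : ℝ := p.toReal with hprdef
    have hqr1 : 1 ≤ qr := by
      have := ENNReal.toReal_mono hqtop (hp.trans hpq)
      simpa using this
    have hpr1 : 1 ≤ pr := by
      have := ENNReal.toReal_mono hptop hp
      simpa using this
    have hqr0 : 0 < qr := lt_of_lt_of_le one_pos hqr1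
    have hpr0 : 0 < pr := lt_of_lt_of_le one_pos hpr1
    have hprqr : pr ≤ qr := ENNReal.toReal_mono hqtop hpq
    have hAdisj' : Pairwise (Function.onFun Disjoint A) := fun j j' h => hAdisj j j' h
    have hBdisj' : Pairwise (Function.onFun Disjoint B) := fun k k' h => hBdisj k k' h
    -- step 2 : per-block decomposition on A j
    have step2 : ∀ j, (∫⁻ x in A j, (‖∫ y, K x y * f y‖₊ : ℝ≥0∞) ^ qr)
        ≤ (N : ℝ≥0∞) ^ (qr - 1) * ∑ k ∈ nbhd d c j,
            ∫⁻ x, (‖g j k x‖₊ : ℝ≥0∞) ^ qr := by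
      intro j
      have hae : (fun x => (‖∫ y, K x y * f y‖₊ : ℝ≥0∞) ^ qr)
          =ᵐ[volume.restrict (A j)]
          fun x => (‖∑ k ∈ nbhd d c j, g j k x‖₊ : ℝ≥0∞) ^ qr := by
        filter_upwards [ae_restrict_of_ae hint, ae_restrict_mem (hAmeas j)] with x hIx hxA
        rw [hsplit j x hxA hIx]
      rw [lintegral_congr_ae hae]
      have hNne : ((N : ℝ≥0∞) ^ (qr - 1)) ≠ ⊤ :=
        ENNReal.rpow_ne_top_of_nonneg (by linarith) (by simp)
      calc ∫⁻ x in A j, (‖∑ k ∈ nbhd d c j, g j k x‖₊ : ℝ≥0∞) ^ qr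
          ≤ ∫⁻ x in A j, (N : ℝ≥0∞) ^ (qr - 1)
              * ∑ k ∈ nbhd d c j, (‖g j k x‖₊ : ℝ≥0∞) ^ qr := by
            apply lintegral_mono
            intro x
            calc (‖∑ k ∈ nbhd d c j, g j k x‖₊ : ℝ≥0∞) ^ qr
                ≤ (∑ k ∈ nbhd d c j, (‖g j k x‖₊ : ℝ≥0∞)) ^ qr := by
                  refine ENNReal.rpow_le_rpow ?_ (by linarith)
                  rw [← ENNReal.coe_finset_sum]
                  exact_mod_cast nnnorm_sum_le _ _
              _ ≤ ((nbhd d c j).card : ℝ≥0∞) ^ (qr - 1)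
                  * ∑ k ∈ nbhd d c j, (‖g j k x‖₊ : ℝ≥0∞) ^ qr :=
                  aux_pow_sum _ _ hqr1
              _ = (N : ℝ≥0∞) ^ (qr - 1)
                  * ∑ k ∈ nbhd d c j, (‖g j k x‖₊ : ℝ≥0∞) ^ qr := by
                  rw [card_nbhd, hNdef]
        _ = (N : ℝ≥0∞) ^ (qr - 1) * ∫⁻ x in A j,
              ∑ k ∈ nbhd d c j, (‖g j k x‖₊ : ℝ≥0∞) ^ qr :=
            lintegral_const_mul' _ _ hNne
        _ = (N : ℝ≥0∞) ^ (qr - 1) * ∑ k ∈ nbhd d c j,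
              ∫⁻ x in A j, (‖g j k x‖₊ : ℝ≥0∞) ^ qr := by
            congr 1
            refine lintegral_finset_sum' _ fun k _ => ?_
            exact ((ENNReal.continuous_rpow_const.measurable).comp_aemeasurable
              (hgmeas j k).enorm).restrict
        _ ≤ (N : ℝ≥0∞) ^ (qr - 1) * ∑ k ∈ nbhd d c j,
              ∫⁻ x, (‖g j k x‖₊ : ℝ≥0∞) ^ qr :=
            mul_le_mul_right (Finset.sum_le_sum fun k _ =>
              setLIntegral_le_lintegral _ _) _
    -- step 3 : block estimate in integral form
    have step3 : ∀ j k, (∫⁻ x, (‖g j k x‖₊ : ℝ≥0∞) ^ qr)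
        ≤ (ENNReal.ofReal M) ^ qr * (eLpNorm ((B k).indicator f) p volume) ^ qr := by
      intro j k
      have h1 : (∫⁻ x, (‖g j k x‖₊ : ℝ≥0∞) ^ qr)
          = (eLpNorm (g j k) q volume) ^ qr := by
        rw [eLpNorm_eq_lintegral_rpow_enorm_toReal hq0 hqtop, ← ENNReal.rpow_mul, one_div,
          inv_mul_cancel₀ (ne_of_gt hqr0), ENNReal.rpow_one]
        rfl
      rw [h1, ← ENNReal.mul_rpow_of_nonneg _ _ (by linarith : (0:ℝ) ≤ qr)]
      exact ENNReal.rpow_le_rpow (hgle j k) (by linarith)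
    -- step 4/5 : summation over blocks
    set a : (Fin d → ℤ) → ℝ≥0∞ :=
      fun k => (eLpNorm ((B k).indicator f) p volume) ^ qr with hadef
    have hswap : (∑' j, ∑ k ∈ nbhd d c j, a k) = (N : ℝ≥0∞) * ∑' k, a k := by
      have h1 : ∀ j, (∑ k ∈ nbhd d c j, a k)
          = ∑' k, if k ∈ nbhd d c j then a k else 0 := by
        intro j
        rw [tsum_eq_sum (s := nbhd d c j) (fun k hk => if_neg hk)]
        exact (Finset.sum_congr rfl fun k hk => (if_pos hk).symm)
      calc (∑' j, ∑ k ∈ nbhd d c j, a k)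
          = ∑' j, ∑' k, if k ∈ nbhd d c j then a k else 0 := tsum_congr h1
        _ = ∑' k, ∑' j, if k ∈ nbhd d c j then a k else 0 := ENNReal.tsum_comm
        _ = ∑' k, ∑ j ∈ nbhd d c k, a k := by
            refine tsum_congr fun k => ?_
            rw [tsum_eq_sum (s := nbhd d c k)
              (fun j hj => if_neg (fun h => hj (nbhd_symm.mp h)))]
            exact Finset.sum_congr rfl fun j hj => if_pos (nbhd_symm.mpr hj)
        _ = ∑' k, (N : ℝ≥0∞) * a k := by
            refine tsum_congr fun k => ?_
            rw [Finset.sum_const, card_nbhd, nsmul_eq_mul, hNdef]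
        _ = (N : ℝ≥0∞) * ∑' k, a k := ENNReal.tsum_mul_left
    have step5 : (∑' k, a k) ≤ (eLpNorm f p volume) ^ qr := by
      set b : (Fin d → ℤ) → ℝ≥0∞ :=
        fun k => ∫⁻ x in B k, (‖f x‖₊ : ℝ≥0∞) ^ pr with hbdef
      have ha : ∀ k, a k = b k ^ (qr / pr) := by
        intro k
        rw [hadef]
        simp only
        rw [eLpNorm_indicator_eq_eLpNorm_restrict (hBmeas k),
          eLpNorm_eq_lintegral_rpow_enorm_toReal hp0 hptop, ← ENNReal.rpow_mul]
        congr 1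
        field_simp
        exact div_self (ne_of_gt hpr0)
      have hb : (∑' k, b k) = ∫⁻ x, (‖f x‖₊ : ℝ≥0∞) ^ pr := by
        have h := lintegral_iUnion (μ := volume) hBmeas hBdisj'
          (fun x => (‖f x‖₊ : ℝ≥0∞) ^ pr)
        rw [hBcover, Measure.restrict_univ] at h
        exact h.symm
      have hr1 : 1 ≤ qr / pr := (one_le_div hpr0).mpr hprqr
      calc (∑' k, a k) = ∑' k, b k ^ (qr / pr) := tsum_congr ha
        _ ≤ (∑' k, b k) ^ (qr / pr) := aux_tsum_rpow _ hr1
        _ = (eLpNorm f p volume) ^ qr := by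
            rw [hb, eLpNorm_eq_lintegral_rpow_enorm_toReal hp0 hptop, ← ENNReal.rpow_mul]
            congr 1
            field_simp
            exact (div_self (ne_of_gt hpr0)).symm
    -- put everything together
    have key : (∫⁻ x, (‖∫ y, K x y * f y‖₊ : ℝ≥0∞) ^ qr)
        ≤ ((N : ℝ≥0∞) * ENNReal.ofReal M * eLpNorm f p volume) ^ qr := by
      calc (∫⁻ x, (‖∫ y, K x y * f y‖₊ : ℝ≥0∞) ^ qr)
          = ∑' j, ∫⁻ x in A j, (‖∫ y, K x y * f y‖₊ : ℝ≥0∞) ^ qr := by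
            have h := lintegral_iUnion (μ := volume) hAmeas hAdisj'
              (fun x => (‖∫ y, K x y * f y‖₊ : ℝ≥0∞) ^ qr)
            rw [hAcover, Measure.restrict_univ] at h
            exact h
        _ ≤ ∑' j, ((N : ℝ≥0∞) ^ (qr - 1) * ∑ k ∈ nbhd d c j,
              ∫⁻ x, (‖g j k x‖₊ : ℝ≥0∞) ^ qr) := ENNReal.tsum_le_tsum step2
        _ ≤ ∑' j, ((N : ℝ≥0∞) ^ (qr - 1) * ∑ k ∈ nbhd d c j,
              (ENNReal.ofReal M) ^ qr * a k) :=
            ENNReal.tsum_le_tsum fun j => mul_le_mul_right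
              (Finset.sum_le_sum fun k _ => step3 j k) _
        _ = (N : ℝ≥0∞) ^ (qr - 1) * (ENNReal.ofReal M) ^ qr
              * ∑' j, ∑ k ∈ nbhd d c j, a k := by
            rw [← ENNReal.tsum_mul_left]
            refine tsum_congr fun j => ?_
            rw [← Finset.mul_sum]
            ring
        _ = (N : ℝ≥0∞) ^ (qr - 1) * (ENNReal.ofReal M) ^ qr
              * ((N : ℝ≥0∞) * ∑' k, a k) := by rw [hswap]
        _ ≤ (N : ℝ≥0∞) ^ (qr - 1) * (ENNReal.ofReal M) ^ qr
              * ((N : ℝ≥0∞) * (eLpNorm f p volume) ^ qr) :=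
            mul_le_mul_right (mul_le_mul_right step5 _) _
        _ = (N : ℝ≥0∞) ^ qr * (ENNReal.ofReal M) ^ qr * (eLpNorm f p volume) ^ qr := by
            have hNpow : (N : ℝ≥0∞) ^ (qr - 1) * (N : ℝ≥0∞) = (N : ℝ≥0∞) ^ qr := by
              conv_rhs => rw [show qr = (qr - 1) + 1 by ring]
              rw [ENNReal.rpow_add_of_nonneg _ _ (by linarith) zero_le_one,
                ENNReal.rpow_one]
            rw [← hNpow]
            ring
        _ = ((N : ℝ≥0∞) * ENNReal.ofReal M * eLpNorm f p volume) ^ qr := by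
            rw [ENNReal.mul_rpow_of_nonneg _ _ (by linarith : (0:ℝ) ≤ qr),
              ENNReal.mul_rpow_of_nonneg _ _ (by linarith : (0:ℝ) ≤ qr)]
    calc eLpNorm (fun x => ∫ y, K x y * f y) q volume
        = (∫⁻ x, (‖∫ y, K x y * f y‖₊ : ℝ≥0∞) ^ qr) ^ (1 / qr) := by
          rw [eLpNorm_eq_lintegral_rpow_enorm_toReal hq0 hqtop]
          rfl
      _ ≤ (((N : ℝ≥0∞) * ENNReal.ofReal M * eLpNorm f p volume) ^ qr) ^ (1 / qr) :=
          ENNReal.rpow_le_rpow key (by positivity)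
      _ = (N : ℝ≥0∞) * ENNReal.ofReal M * eLpNorm f p volume := by
          rw [← ENNReal.rpow_mul, mul_one_div, div_self (ne_of_gt hqr0), ENNReal.rpow_one]
      _ ≤ ENNReal.ofReal ((2 * C + 1) ^ d * M) * eLpNorm f p volume :=
          mul_le_mul_left hconst _
end
end

section
/- There exist absolute constants δ₁ > 0 and C₀ ≥ 1 such that for every n ≥ 2, every 0 < δ < δ₁, every t > 5, and all x, y ∈ ℝⁿ with y ≠ 0 ≠ x: if 1 ≤ |y| ≤ 2, | |x−y| − |t−|y|| | ≤ δ/2, and δ ≤ t − |x| ≤ 2δ, then C₀^{−1} δ^{1/2} ≤ | y/|y| − x/|x| | ≤ C₀ δ^{1/2}. -/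
open Real

noncomputable section

set_option maxHeartbeats 1600000 in
/-- **Lemma 3.4: internally tangent spheres separate at angle `≈ δ^{1/2}`.** -/
theorem internally_tangent_spheres :
    ∃ δ₁ : ℝ, 0 < δ₁ ∧ ∃ C₀ : ℝ, 1 ≤ C₀ ∧
      ∀ (n : ℕ), 2 ≤ n →
        ∀ (δ t : ℝ) (x y : EuclideanSpace ℝ (Fin n)),
          0 < δ → δ < δ₁ → 5 < t → x ≠ 0 → y ≠ 0 →
          1 ≤ ‖y‖ → ‖y‖ ≤ 2 →
          abs (‖x - y‖ - abs (t - ‖y‖)) ≤ δ / 2 →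
          δ ≤ t - ‖x‖ → t - ‖x‖ ≤ 2 * δ →
          C₀⁻¹ * Real.sqrt δ ≤ ‖‖y‖⁻¹ • y - ‖x‖⁻¹ • x‖ ∧
            ‖‖y‖⁻¹ • y - ‖x‖⁻¹ • x‖ ≤ C₀ * Real.sqrt δ := by
  refine ⟨1/2, by norm_num, 5, by norm_num, ?_⟩
  intro n hn δ t x y hδ hδ1 ht hx0 hy0 hs1 hs2 habs hu1 hu2
  set r := ‖x‖ with hrdef
  set s := ‖y‖ with hsdef
  set d := ‖x - y‖ with hddef
  have hrpos : 0 < r := norm_pos_iff.mpr hx0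
  have hspos : 0 < s := by linarith
  have hts : |t - s| = t - s := abs_of_nonneg (by linarith)
  rw [hts] at habs
  obtain ⟨hd1, hd2⟩ := abs_le.mp habs
  have hd1' : t - s - δ/2 ≤ d := by linarith
  have hd2' : d ≤ t - s + δ/2 := by linarith
  have hr1 : t - 2*δ ≤ r := by linarith
  have hr2 : r ≤ t - δ := by linarith
  set ip : ℝ := @inner ℝ _ _ x y with hipdef
  have hdsq : d^2 = r^2 - 2*ip + s^2 := by
    rw [hddef, hrdef, hsdef, hipdef]
    exact norm_sub_sq_real x y
  set N := ‖s⁻¹ • y - r⁻¹ • x‖ with hNdef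
  have hNnn : (0:ℝ) ≤ N := norm_nonneg _
  have h1 : ‖s⁻¹ • y‖ = 1 := by
    rw [norm_smul, norm_inv, Real.norm_eq_abs, abs_of_pos hspos, ← hsdef]
    field_simp
  have h2 : ‖r⁻¹ • x‖ = 1 := by
    rw [norm_smul, norm_inv, Real.norm_eq_abs, abs_of_pos hrpos, ← hrdef]
    field_simp
  have hN2 : N^2 = 2 - 2*(s⁻¹*(r⁻¹*ip)) := by
    rw [hNdef, norm_sub_sq_real, h1, h2, real_inner_smul_left, real_inner_smul_right,
      real_inner_comm]
    rw [← hipdef]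
    ring
  have key : N^2 * (r*s) = (d - r + s) * (d + r - s) := by
    have hs' : s⁻¹ * s = 1 := inv_mul_cancel₀ hspos.ne'
    have hr' : r⁻¹ * r = 1 := inv_mul_cancel₀ hrpos.ne'
    rw [hN2]
    linear_combination -hdsq - 2*ip*(r⁻¹*r)*hs' - 2*ip*hr'
  have hA : δ/2 ≤ d - r + s := by linarith
  have hA' : d - r + s ≤ 5*δ/2 := by linarith
  have hB : 2*t - 21/4 ≤ d + r - s := by linarith
  have hB' : d + r - s ≤ 2*t := by linarith
  have hrs_ub : r*s ≤ 2*t := by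
    have h := mul_le_mul_of_nonneg_left hs2 hrpos.le
    linarith
  have hrs_lb : t - 1 ≤ r*s := by
    have h := mul_le_mul_of_nonneg_left hs1 hrpos.le
    linarith
  have hrspos : 0 < r*s := mul_pos hrpos hspos
  have hN2lb : δ/25 ≤ N^2 := by
    have h : δ/25 * (r*s) ≤ N^2 * (r*s) := by
      rw [key]
      have p1 : δ/2 * (2*t - 21/4) ≤ (d - r + s) * (d + r - s) :=
        mul_le_mul hA hB (by linarith) (by linarith)
      have p2 : δ/25 * (r*s) ≤ δ/25 * (2*t) :=
        mul_le_mul_of_nonneg_left hrs_ub (by positivity)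
      have p3 : δ/25 * (2*t) ≤ δ/2 * (2*t - 21/4) := by
        nlinarith [mul_nonneg hδ.le (show (0:ℝ) ≤ 23*t/25 - 21/8 by linarith)]
      linarith
    exact le_of_mul_le_mul_right h hrspos
  have hN2ub : N^2 ≤ 25*δ/4 := by
    have h : N^2 * (r*s) ≤ 25*δ/4 * (r*s) := by
      rw [key]
      have p1 : (d - r + s) * (d + r - s) ≤ 5*δ/2 * (2*t) :=
        mul_le_mul hA' hB' (by linarith) (by linarith)
      have p2 : 25*δ/4 * (t - 1) ≤ 25*δ/4 * (r*s) :=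
        mul_le_mul_of_nonneg_left hrs_lb (by positivity)
      have p3 : 5*δ/2 * (2*t) ≤ 25*δ/4 * (t - 1) := by
        nlinarith [mul_nonneg hδ.le (show (0:ℝ) ≤ t - 5 by linarith)]
      linarith
    exact le_of_mul_le_mul_right h hrspos
  constructor
  · have h5 : Real.sqrt δ ≤ Real.sqrt ((5*N)^2) := Real.sqrt_le_sqrt (by nlinarith)
    rw [Real.sqrt_sq (by positivity)] at h5
    linarith
  · have hsd : Real.sqrt δ ^ 2 = δ := Real.sq_sqrt hδ.le
    have h6 : Real.sqrt (N^2) ≤ Real.sqrt ((5*Real.sqrt δ)^2) :=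
      Real.sqrt_le_sqrt (by nlinarith [Real.sqrt_nonneg δ])
    rw [Real.sqrt_sq hNnn, Real.sqrt_sq (by positivity)] at h6
    linarith
end
end
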